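/- Let G be a simple 6-regular graph with m edges. Then every multigraph in the Δ-YY equivalence class of G has exactly m non-empty connections, i.e. exactly m pairs of adjacent vertices. -/

import Mathlib

open scoped Classical

noncomputable section

/-- A multigraph: a finite vertex type together with a symmetric multiplicity
function recording the size of the connection (set of parallel edges) between
any two vertices; there are no loops. -/
structure MG : Type 1 where
  V : Type
  fin : Fintype V
  mult : V → V → ℕ
  symm : ∀ u v, mult u v = mult v u
  loopless : ∀ v, mult v v = 0

namespace MG

/-- Two vertices are adjacent when their connection is non-empty. -/
def Adj (G : MG) (u v : G.V) : Prop := 0 < G.mult u v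

/-- Connection size as a function on unordered pairs of vertices. -/
def multS (G : MG) : Sym2 G.V → ℕ := Sym2.lift ⟨G.mult, G.symm⟩

/-- Number of vertices. -/
def order (G : MG) : ℕ := @Fintype.card G.V G.fin

/-- Degree of a vertex, counting edges with multiplicity. -/
def deg (G : MG) (v : G.V) : ℕ :=
  haveI := G.fin
  ∑ u, G.mult v u

/-- `G` is `k`-regular. -/
def Regular (G : MG) (k : ℕ) : Prop := ∀ v, G.deg v = k

/-- A simple graph: every connection has size at most 1. -/
def Simple (G : MG) : Prop := ∀ u v, G.mult u v ≤ 1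

/-- Isomorphism of multigraphs. -/
def Iso (G H : MG) : Prop :=
  ∃ e : G.V ≃ H.V, ∀ u v, H.mult (e u) (e v) = G.mult u v

/-- Indicator: is `{a,b}` one of the three pairs `{u,v}, {u,w}, {v,w}`? -/
def triCount {V : Type} (u v w a b : V) : ℕ :=
  if s(a, b) ∈ ({s(u, v), s(u, w), s(v, w)} : Set (Sym2 V)) then 1 else 0

lemma triCount_symm {V : Type} (u v w a b : V) :
    triCount u v w a b = triCount u v w b a := by
  unfold triCount
  have h : s(a, b) = s(b, a) := Sym2.eq_swap
  rw [h]

/-- `u, v, w` form a delta (triangle): pairwise distinct and pairwise adjacent. -/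
def IsDelta (G : MG) (u v w : G.V) : Prop :=
  u ≠ v ∧ u ≠ w ∧ v ≠ w ∧ G.Adj u v ∧ G.Adj u w ∧ G.Adj v w

/-- `x` is the centre of a wye with external vertices `u, v, w`: the edges
incident to `x` are exactly two parallel edges to each of `u, v, w`. -/
def IsWye (G : MG) (x u v w : G.V) : Prop :=
  u ≠ v ∧ u ≠ w ∧ v ≠ w ∧ x ≠ u ∧ x ≠ v ∧ x ≠ w ∧
    G.mult x u = 2 ∧ G.mult x v = 2 ∧ G.mult x w = 2 ∧
    ∀ y : G.V, y ≠ u → y ≠ v → y ≠ w → G.mult x y = 0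

/-- Multiplicity function of the result of a Δ-YY transformation on the
delta `u, v, w`; the new vertex `x` is `none`. -/
def deltaMult (G : MG) (u v w : G.V) : Option G.V → Option G.V → ℕ
  | none, none => 0
  | none, some b => if b = u ∨ b = v ∨ b = w then 2 else 0
  | some a, none => if a = u ∨ a = v ∨ a = w then 2 else 0
  | some a, some b => G.mult a b - triCount u v w a b

/-- The result of the Δ-YY transformation on the delta `u, v, w`: one edge of
each of the connections `uv`, `uw`, `vw` is removed, a new vertex (`none`) is
added, joined by two parallel edges to each of `u, v, w`. -/
def deltaYY (G : MG) (u v w : G.V) : MG where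
  V := Option G.V
  fin := by haveI := G.fin; infer_instance
  mult := G.deltaMult u v w
  symm := by
    rintro (_ | a) (_ | b)
    · rfl
    · rfl
    · rfl
    · show G.mult a b - triCount u v w a b = G.mult b a - triCount u v w b a
      rw [G.symm a b, triCount_symm]
  loopless := by
    rintro (_ | a)
    · rfl
    · show G.mult a a - triCount u v w a a = 0
      rw [G.loopless]
      exact Nat.zero_sub _

/-- The result of the YY-Δ transformation on a wye with centre `x` and external
vertices `u, v, w`: the vertex `x` is deleted together with all its incident
edges, and one new edge is added to each of the connections `uv`, `uw`, `vw`. -/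
def yyDelta (G : MG) (x u v w : G.V) : MG where
  V := {y : G.V // y ≠ x}
  fin := by haveI := G.fin; infer_instance
  mult a b := if a = b then 0 else G.mult a.1 b.1 + triCount u v w a.1 b.1
  symm := by
    intro a b
    try dsimp only
    rcases eq_or_ne a b with h | h
    · subst h; rfl
    · rw [if_neg h, if_neg h.symm, G.symm a.1 b.1, triCount_symm]
  loopless := fun a => if_pos rfl

/-- `G'` is obtained from `G` by a Δ-YY transformation. -/
def DeltaYYStep (G G' : MG) : Prop :=
  ∃ u v w : G.V, G.IsDelta u v w ∧ Iso (G.deltaYY u v w) G'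

/-- `G'` is obtained from `G` by a YY-Δ transformation. -/
def YYDeltaStep (G G' : MG) : Prop :=
  ∃ x u v w : G.V, G.IsWye x u v w ∧ Iso (G.yyDelta x u v w) G'

/-- `G'` is obtained from `G` by a Δ-YY operation (either a Δ-YY transformation
or a YY-Δ transformation). -/
def Step (G G' : MG) : Prop := DeltaYYStep G G' ∨ YYDeltaStep G G'

/-- Δ-YY equivalence: `G` can be transformed into `H`, up to isomorphism, by a
finite sequence of Δ-YY operations. -/
def DYYEquiv : MG → MG → Prop :=
  Relation.EqvGen (fun G G' => Step G G' ∨ Iso G G')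

/-- The Δ-YY equivalence class of `G` contains only finitely many isomorphism
classes of multigraphs. -/
def FiniteClass (G : MG) : Prop :=
  ∃ S : Finset MG, ∀ H : MG, DYYEquiv G H → ∃ H' ∈ S, Iso H H'

/-- Connectivity: nonempty, and any two vertices are joined by a path. -/
def Connected (G : MG) : Prop :=
  Nonempty G.V ∧ ∀ u v : G.V, Relation.ReflTransGen G.Adj u v

/-- The multigraph obtained by deleting a set of vertices (and all edges
incident to them). -/
def deleteVerts (G : MG) (S : Set G.V) : MG where
  V := {y : G.V // y ∉ S}
  fin := by haveI := G.fin; infer_instance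
  mult a b := G.mult a.1 b.1
  symm := fun a b => G.symm a.1 b.1
  loopless := fun a => G.loopless a.1

/-- `G` is `k`-connected: it has more than `k` vertices and deleting any set of
fewer than `k` vertices leaves a connected multigraph. -/
def KConnected (G : MG) (k : ℕ) : Prop :=
  k < G.order ∧ ∀ S : Set G.V, S.ncard < k → (G.deleteVerts S).Connected

/-- `G` is planar: it has a drawing in the plane in which vertices are distinct
points, every edge (each parallel edge separately) is a continuous injective
arc joining the points of its endpoints, no arc passes through a vertex point
in its interior, and the interiors of the arcs of distinct edges are disjoint.
The arc of the `k`-th edge from `v` to `u` is the reverse of the arc of the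
`k`-th edge from `u` to `v` (they are the same edge drawn once). -/
def IsPlanar (G : MG) : Prop :=
  ∃ (pos : G.V → ℝ × ℝ) (γ : G.V → G.V → ℕ → C(unitInterval, ℝ × ℝ)),
    Function.Injective pos ∧
    (∀ u v k, k < G.mult u v →
      γ u v k 0 = pos u ∧ γ u v k 1 = pos v ∧ Function.Injective (γ u v k)) ∧
    (∀ u v k (t : unitInterval), γ v u k t = γ u v k (unitInterval.symm t)) ∧
    (∀ u v k, k < G.mult u v → ∀ t : unitInterval, t ≠ 0 → t ≠ 1 →
      ∀ z : G.V, γ u v k t ≠ pos z) ∧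
    (∀ u v k u' v' k', k < G.mult u v → k' < G.mult u' v' →
      (s(u, v) ≠ s(u', v') ∨ k ≠ k') →
      ∀ t t' : unitInterval, t ≠ 0 → t ≠ 1 → t' ≠ 0 → t' ≠ 1 →
        γ u v k t ≠ γ u' v' k' t')

/-- An independent set: no two of its vertices are adjacent. -/
def IsIndepSet (G : MG) (S : Set G.V) : Prop :=
  ∀ u ∈ S, ∀ v ∈ S, ¬ G.Adj u v

/-- The independence number `α(G)`: the maximum size of an independent set. -/
def indepNum (G : MG) : ℕ :=
  sSup {n | ∃ S : Set G.V, G.IsIndepSet S ∧ S.ncard = n}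

/-- The number of non-empty connections, i.e. the number of edges of the
simplification `G^S`. -/
def numConn (G : MG) : ℕ := {p : Sym2 G.V | G.multS p ≠ 0}.ncard

/-- The cyclomatic number `m - n + 1` of the simplification `G^S` of `G`. -/
def cyclomaticS (G : MG) : ℤ := (G.numConn : ℤ) - (G.order : ℤ) + 1

/-- `AddOnAt G a S` : the vertex set `S` of `G` carries (a subgraph copy of) an
add-on whose addition vertex is `a`.  An add-on of length 0 is a double edge or
a delta; an add-on of length `n ≥ 1` is a 4-cycle `a b c d` with the
connections `ab`, `ad` of size 1 and `bc`, `cd` of size 2, glued at `c` to an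
add-on of length `n - 1`. -/
inductive AddOnAt (G : MG) : G.V → Set G.V → Prop
  | double (a b : G.V) : a ≠ b → 2 ≤ G.mult a b → AddOnAt G a {a, b}
  | delta (a b c : G.V) : a ≠ b → a ≠ c → b ≠ c →
      1 ≤ G.mult a b → 1 ≤ G.mult a c → 1 ≤ G.mult b c → AddOnAt G a {a, b, c}
  | link (a b c d : G.V) (S : Set G.V) :
      a ≠ b → a ≠ c → a ≠ d → b ≠ c → b ≠ d → c ≠ d →
      1 ≤ G.mult a b → 1 ≤ G.mult a d → 2 ≤ G.mult b c → 2 ≤ G.mult c d →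
      AddOnAt G c S → S ∩ {a, b, d} = ∅ → AddOnAt G a ({a, b, d} ∪ S)

/-- `G` contains one of the four families of excluded subgraphs. -/
def HasExcluded (G : MG) : Prop :=
  -- (1) a 3-cycle in which at least one connection has size at least 2
  (∃ a b c : G.V, a ≠ b ∧ a ≠ c ∧ b ≠ c ∧
      2 ≤ G.mult a b ∧ 1 ≤ G.mult a c ∧ 1 ≤ G.mult b c) ∨
  -- (2) a 4-cycle with at least three connections of size at least 2 and an
  -- add-on glued at a vertex incident to two of them
  (∃ a b c d : G.V, ∃ S : Set G.V,
      a ≠ b ∧ a ≠ c ∧ a ≠ d ∧ b ≠ c ∧ b ≠ d ∧ c ≠ d ∧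
      2 ≤ G.mult a b ∧ 2 ≤ G.mult b c ∧ 2 ≤ G.mult c d ∧ 1 ≤ G.mult d a ∧
      AddOnAt G b S ∧ S ∩ {a, c, d} = ∅) ∨
  -- (3) a 5-cycle with all connections of size at least 2 and add-ons glued at
  -- two non-adjacent vertices of the cycle
  (∃ v₀ v₁ v₂ v₃ v₄ : G.V, ∃ S T : Set G.V,
      v₀ ≠ v₁ ∧ v₀ ≠ v₂ ∧ v₀ ≠ v₃ ∧ v₀ ≠ v₄ ∧ v₁ ≠ v₂ ∧ v₁ ≠ v₃ ∧ v₁ ≠ v₄ ∧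
      v₂ ≠ v₃ ∧ v₂ ≠ v₄ ∧ v₃ ≠ v₄ ∧
      2 ≤ G.mult v₀ v₁ ∧ 2 ≤ G.mult v₁ v₂ ∧ 2 ≤ G.mult v₂ v₃ ∧
      2 ≤ G.mult v₃ v₄ ∧ 2 ≤ G.mult v₄ v₀ ∧
      AddOnAt G v₀ S ∧ AddOnAt G v₂ T ∧
      S ∩ {v₁, v₂, v₃, v₄} = ∅ ∧ T ∩ {v₀, v₁, v₃, v₄} = ∅ ∧ S ∩ T = ∅) ∨
  -- (4) a 4-cycle with three connections of size at least 2, whose fourth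
  -- connection has size 1 and lies in a triangle, with add-ons glued at both
  -- vertices of that connection
  (∃ a b c d e : G.V, ∃ S T : Set G.V,
      a ≠ b ∧ a ≠ c ∧ a ≠ d ∧ a ≠ e ∧ b ≠ c ∧ b ≠ d ∧ b ≠ e ∧
      c ≠ d ∧ c ≠ e ∧ d ≠ e ∧
      2 ≤ G.mult a b ∧ 2 ≤ G.mult b c ∧ 2 ≤ G.mult c d ∧ G.mult d a = 1 ∧
      1 ≤ G.mult d e ∧ 1 ≤ G.mult e a ∧
      AddOnAt G a S ∧ AddOnAt G d T ∧
      S ∩ {b, c, d, e} = ∅ ∧ T ∩ {a, b, c, e} = ∅ ∧ S ∩ T = ∅)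

/-- The doubling of a simple graph: every edge is replaced by a connection of
size 2. -/
def doubling {V : Type} [Fintype V] (H : SimpleGraph V) : MG where
  V := V
  fin := inferInstance
  mult u v := if H.Adj u v then 2 else 0
  symm := by
    intro u v
    try dsimp only
    by_cases h : H.Adj u v
    · rw [if_pos h, if_pos h.symm]
    · rw [if_neg h, if_neg fun h' => h h'.symm]
  loopless := fun v => if_neg (H.loopless.irrefl v)

end MG

end

noncomputable section

namespace MG

/-- `y` is one of `u,v,w`. -/
def Ext3 {V : Type} (u v w y : V) : Prop := y = u ∨ y = v ∨ y = w

/-- A triangle containing a double edge. -/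
def BadT (G : MG) : Prop := ∃ a b c : G.V, a ≠ b ∧ a ≠ c ∧ b ≠ c ∧
  2 ≤ G.mult a b ∧ 1 ≤ G.mult a c ∧ 1 ≤ G.mult b c

/-- A 4-cycle with three consecutive double connections. -/
def BadS (G : MG) : Prop := ∃ a b c d : G.V,
  a ≠ b ∧ a ≠ c ∧ a ≠ d ∧ b ≠ c ∧ b ≠ d ∧ c ≠ d ∧
  2 ≤ G.mult a b ∧ 2 ≤ G.mult b c ∧ 2 ≤ G.mult c d ∧ 1 ≤ G.mult d a

/-- A 5-cycle all of whose connections are double. -/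
def BadP (G : MG) : Prop := ∃ a b c d e : G.V,
  a ≠ b ∧ a ≠ c ∧ a ≠ d ∧ a ≠ e ∧ b ≠ c ∧ b ≠ d ∧ b ≠ e ∧ c ≠ d ∧ c ≠ e ∧ d ≠ e ∧
  2 ≤ G.mult a b ∧ 2 ≤ G.mult b c ∧ 2 ≤ G.mult c d ∧ 2 ≤ G.mult d e ∧ 2 ≤ G.mult e a

def GoodG (G : MG) : Prop := ¬ G.BadT ∧ ¬ G.BadS ∧ ¬ G.BadP

section TriCount

variable {V : Type} {u v w a b : V}

lemma mem_tripairs_iff :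
    (s(a,b) ∈ ({s(u, v), s(u, w), s(v, w)} : Set (Sym2 V))) ↔
      (a = u ∧ b = v) ∨ (a = v ∧ b = u) ∨ (a = u ∧ b = w) ∨ (a = w ∧ b = u)
        ∨ (a = v ∧ b = w) ∨ (a = w ∧ b = v) := by
  simp only [Set.mem_insert_iff, Set.mem_singleton_iff, Sym2.eq_iff]
  tauto

lemma triCount_eq_zero (h : ¬ (Ext3 u v w a ∧ Ext3 u v w b)) :
    triCount u v w a b = 0 := by
  unfold triCount
  rw [if_neg]
  intro hm
  rw [mem_tripairs_iff] at hm
  unfold Ext3 at h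
  tauto

lemma triCount_eq_one (ha : Ext3 u v w a) (hb : Ext3 u v w b) (hab : a ≠ b) :
    triCount u v w a b = 1 := by
  unfold triCount
  rw [if_pos]
  rw [mem_tripairs_iff]
  unfold Ext3 at ha hb
  rcases ha with h1 | h1 | h1 <;> rcases hb with h2 | h2 | h2 <;> subst h1 <;> subst h2 <;> tauto

lemma triCount_le (u v w a b : V) : triCount u v w a b ≤ 1 := by
  unfold triCount; split <;> omega

end TriCount

/-- A simple delta: three pairwise distinct vertices all of whose connections
have size exactly one. -/
def SDelta (H : MG) (u v w : H.V) : Prop :=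
  u ≠ v ∧ u ≠ w ∧ v ≠ w ∧ H.mult u v = 1 ∧ H.mult u w = 1 ∧ H.mult v w = 1

namespace SDelta

variable {H : MG} {u v w : H.V}

lemma mult_eq_one (hs : H.SDelta u v w) {a b : H.V}
    (ha : Ext3 u v w a) (hb : Ext3 u v w b) (hab : a ≠ b) : H.mult a b = 1 := by
  obtain ⟨h1, h2, h3, e1, e2, e3⟩ := hs
  rcases ha with rfl | rfl | rfl <;> rcases hb with rfl | rfl | rfl <;>
    first
      | exact absurd rfl hab
      | assumption
      | (rw [H.symm]; assumption)

end SDelta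

end MG

end
noncomputable section
namespace MG

section DeltaYYBad

variable {H : MG} {u v w : H.V}

lemma deltaYY_mult_ss (H : MG) (u v w a b : H.V) :
    (H.deltaYY u v w).mult (some a) (some b) = H.mult a b - triCount u v w a b := rfl

lemma deltaYY_mult_ns (H : MG) (u v w b : H.V) :
    (H.deltaYY u v w).mult none (some b) = if b = u ∨ b = v ∨ b = w then 2 else 0 := rfl

lemma deltaYY_mult_sn (H : MG) (u v w a : H.V) :
    (H.deltaYY u v w).mult (some a) none = if a = u ∨ a = v ∨ a = w then 2 else 0 := rfl

lemma deltaYY_mult_nn (H : MG) (u v w : H.V) :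
    (H.deltaYY u v w).mult none none = 0 := rfl

lemma extN {b : H.V} (h : 1 ≤ (H.deltaYY u v w).mult none (some b)) : Ext3 u v w b := by
  rw [deltaYY_mult_ns] at h
  by_contra hc
  unfold Ext3 at hc
  rw [if_neg hc] at h
  omega

lemma extN' {a : H.V} (h : 1 ≤ (H.deltaYY u v w).mult (some a) none) : Ext3 u v w a := by
  rw [deltaYY_mult_sn] at h
  by_contra hc
  unfold Ext3 at hc
  rw [if_neg hc] at h
  omega

lemma ext_one (hs : H.SDelta u v w) {a b : H.V} (hab : a ≠ b)
    (h : 1 ≤ (H.deltaYY u v w).mult (some a) (some b)) :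
    1 ≤ H.mult a b ∧ ¬ (Ext3 u v w a ∧ Ext3 u v w b) := by
  rw [deltaYY_mult_ss] at h
  constructor
  · exact le_trans h (Nat.sub_le _ _)
  · rintro ⟨ha, hb⟩
    rw [hs.mult_eq_one ha hb hab, triCount_eq_one ha hb hab] at h
    omega

lemma ext_two (hs : H.SDelta u v w) {a b : H.V} (hab : a ≠ b)
    (h : 2 ≤ (H.deltaYY u v w).mult (some a) (some b)) :
    2 ≤ H.mult a b ∧ ¬ (Ext3 u v w a ∧ Ext3 u v w b) := by
  rw [deltaYY_mult_ss] at h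
  constructor
  · exact le_trans h (Nat.sub_le _ _)
  · rintro ⟨ha, hb⟩
    rw [hs.mult_eq_one ha hb hab, triCount_eq_one ha hb hab] at h
    omega

lemma some_ne {a b : H.V} (h : (some a : Option H.V) ≠ some b) : a ≠ b :=
  fun hh => h (by rw [hh])

/-- Forward: a bad triangle in the Δ-YY transform yields a bad triangle. -/
lemma badT_of_deltaYY (hs : H.SDelta u v w) (h : (H.deltaYY u v w).BadT) : H.BadT := by
  obtain ⟨a, b, c, hab, hac, hbc, h2, h1a, h1b⟩ := h
  match a, b, c with
  | none, none, _ => exact absurd rfl hab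
  | none, _, none => exact absurd rfl hac
  | some _, none, none => exact absurd rfl hbc
  | none, some b, some c =>
    have hb := extN (u := u) (v := v) (w := w) (le_trans (by norm_num) h2)
    have hc := extN h1a
    exact absurd ⟨hb, hc⟩ (ext_one hs (some_ne hbc) h1b).2
  | some a, none, some c =>
    have ha := extN' (u := u) (v := v) (w := w) (le_trans (by norm_num) h2)
    have hc := extN h1b
    exact absurd ⟨ha, hc⟩ (ext_one hs (some_ne hac) h1a).2
  | some a, some b, none =>
    have ha := extN' h1a
    have hb := extN' h1b
    exact absurd ⟨ha, hb⟩ (ext_two hs (some_ne hab) h2).2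
  | some a, some b, some c =>
    exact ⟨a, b, c, some_ne hab, some_ne hac, some_ne hbc,
      (ext_two hs (some_ne hab) h2).1, (ext_one hs (some_ne hac) h1a).1,
      (ext_one hs (some_ne hbc) h1b).1⟩

end DeltaYYBad

end MG
end
noncomputable section
namespace MG

section DeltaYYBad2

variable {H : MG} {u v w : H.V}

lemma sne {a b : H.V} (h : a ≠ b) : (some a : Option H.V) ≠ some b :=
  fun hh => h (Option.some.inj hh)

lemma snn (a : H.V) : (some a : Option H.V) ≠ none := Option.some_ne_none a

lemma nns (a : H.V) : (none : Option H.V) ≠ some a := (Option.some_ne_none a).symm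

lemma mult'_of_not {a b : H.V} (h : ¬ (Ext3 u v w a ∧ Ext3 u v w b)) :
    (H.deltaYY u v w).mult (some a) (some b) = H.mult a b := by
  rw [deltaYY_mult_ss, triCount_eq_zero h, Nat.sub_zero]

lemma mult'_sn_ext {a : H.V} (ha : Ext3 u v w a) :
    (H.deltaYY u v w).mult (some a) none = 2 := by
  rw [deltaYY_mult_sn, if_pos (by unfold Ext3 at ha; exact ha)]

lemma mult'_ns_ext {b : H.V} (hb : Ext3 u v w b) :
    (H.deltaYY u v w).mult none (some b) = 2 := by
  rw [deltaYY_mult_ns, if_pos (by unfold Ext3 at hb; exact hb)]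

/-- Forward: a bad square in the Δ-YY transform yields a bad pattern. -/
lemma badS_of_deltaYY (hs : H.SDelta u v w) (h : (H.deltaYY u v w).BadS) :
    H.BadT ∨ H.BadS := by
  obtain ⟨a, b, c, d, hab, hac, had, hbc, hbd, hcd, h1, h2, h3, h4⟩ := h
  match a, b, c, d with
  | none, none, _, _ => exact absurd rfl hab
  | none, _, none, _ => exact absurd rfl hac
  | none, _, _, none => exact absurd rfl had
  | some _, none, none, _ => exact absurd rfl hbc
  | some _, none, _, none => exact absurd rfl hbd
  | some _, some _, none, none => exact absurd rfl hcd
  | none, some b, some c, some d =>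
    have hb := extN (u := u) (v := v) (w := w) (le_trans one_le_two h1)
    have hd := extN' (u := u) (v := v) (w := w) h4
    obtain ⟨e2, hnbc⟩ := ext_two hs (some_ne hbc) h2
    obtain ⟨e3, _⟩ := ext_two hs (some_ne hcd) h3
    refine Or.inl ⟨b, c, d, some_ne hbc, some_ne hbd, some_ne hcd, e2, ?_, le_trans one_le_two e3⟩
    rw [hs.mult_eq_one hb hd (some_ne hbd)]
  | some a, none, some c, some d =>
    have ha := extN' (u := u) (v := v) (w := w) (le_trans one_le_two h1)
    have hc := extN (u := u) (v := v) (w := w) (le_trans one_le_two h2)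
    obtain ⟨e3, hncd⟩ := ext_two hs (some_ne hcd) h3
    have hda : d ≠ a := (some_ne had).symm
    obtain ⟨e4, _⟩ := ext_one hs hda h4
    have hca : c ≠ a := (some_ne hac).symm
    refine Or.inl ⟨c, d, a, some_ne hcd, hca, hda, e3, ?_, e4⟩
    rw [hs.mult_eq_one hc ha hca]
  | some a, some b, none, some d =>
    have hb := extN' (u := u) (v := v) (w := w) (le_trans one_le_two h2)
    have hd := extN (u := u) (v := v) (w := w) (le_trans one_le_two h3)
    obtain ⟨e1, hnab⟩ := ext_two hs (some_ne hab) h1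
    obtain ⟨e4, _⟩ := ext_one hs ((some_ne had).symm) h4
    refine Or.inl ⟨a, b, d, some_ne hab, some_ne had, some_ne hbd, e1, ?_, ?_⟩
    · rw [H.symm]; exact e4
    · rw [hs.mult_eq_one hb hd (some_ne hbd)]
  | some a, some b, some c, none =>
    have hc := extN' (u := u) (v := v) (w := w) (le_trans one_le_two h3)
    have ha := extN (u := u) (v := v) (w := w) h4
    obtain ⟨e1, hnab⟩ := ext_two hs (some_ne hab) h1
    obtain ⟨e2, _⟩ := ext_two hs (some_ne hbc) h2
    refine Or.inl ⟨b, a, c, (some_ne hab).symm, some_ne hbc, some_ne hac, ?_, le_trans one_le_two e2, ?_⟩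
    · rw [H.symm]; exact e1
    · rw [hs.mult_eq_one ha hc (some_ne hac)]
  | some a, some b, some c, some d =>
    exact Or.inr ⟨a, b, c, d, some_ne hab, some_ne hac, some_ne had, some_ne hbc,
      some_ne hbd, some_ne hcd, (ext_two hs (some_ne hab) h1).1,
      (ext_two hs (some_ne hbc) h2).1, (ext_two hs (some_ne hcd) h3).1,
      (ext_one hs ((some_ne had).symm) h4).1⟩

/-- Forward: a bad pentagon in the Δ-YY transform yields a bad pattern. -/
lemma badP_of_deltaYY (hs : H.SDelta u v w) (h : (H.deltaYY u v w).BadP) :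
    H.BadS ∨ H.BadP := by
  obtain ⟨a, b, c, d, e, hab, hac, had, hae, hbc, hbd, hbe, hcd, hce, hde,
    h1, h2, h3, h4, h5⟩ := h
  match a, b, c, d, e with
  | none, none, _, _, _ => exact absurd rfl hab
  | none, _, none, _, _ => exact absurd rfl hac
  | none, _, _, none, _ => exact absurd rfl had
  | none, _, _, _, none => exact absurd rfl hae
  | some _, none, none, _, _ => exact absurd rfl hbc
  | some _, none, _, none, _ => exact absurd rfl hbd
  | some _, none, _, _, none => exact absurd rfl hbe
  | some _, some _, none, none, _ => exact absurd rfl hcd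
  | some _, some _, none, _, none => exact absurd rfl hce
  | some _, some _, some _, none, none => exact absurd rfl hde
  | none, some b, some c, some d, some e =>
    have hb := extN (u := u) (v := v) (w := w) (le_trans one_le_two h1)
    have he := extN' (u := u) (v := v) (w := w) (le_trans one_le_two h5)
    obtain ⟨e2, hn2⟩ := ext_two hs (some_ne hbc) h2
    obtain ⟨e3, _⟩ := ext_two hs (some_ne hcd) h3
    obtain ⟨e4, hn4⟩ := ext_two hs (some_ne hde) h4
    refine Or.inl ⟨b, c, d, e, some_ne hbc, some_ne hbd, some_ne hbe,
      some_ne hcd, some_ne hce, some_ne hde, e2, e3, e4, ?_⟩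
    rw [hs.mult_eq_one he hb ((some_ne hbe).symm)]
  | some a, none, some c, some d, some e =>
    have ha := extN' (u := u) (v := v) (w := w) (le_trans one_le_two h1)
    have hc := extN (u := u) (v := v) (w := w) (le_trans one_le_two h2)
    obtain ⟨e3, _⟩ := ext_two hs (some_ne hcd) h3
    obtain ⟨e4, _⟩ := ext_two hs (some_ne hde) h4
    obtain ⟨e5, _⟩ := ext_two hs ((some_ne hae).symm) h5
    refine Or.inl ⟨c, d, e, a, some_ne hcd, some_ne hce, (some_ne hac).symm,
      some_ne hde, (some_ne had).symm, (some_ne hae).symm, e3, e4, e5, ?_⟩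
    rw [hs.mult_eq_one ha hc (some_ne hac)]
  | some a, some b, none, some d, some e =>
    have hb := extN' (u := u) (v := v) (w := w) (le_trans one_le_two h2)
    have hd := extN (u := u) (v := v) (w := w) (le_trans one_le_two h3)
    obtain ⟨e4, _⟩ := ext_two hs (some_ne hde) h4
    obtain ⟨e5, _⟩ := ext_two hs ((some_ne hae).symm) h5
    obtain ⟨e1, _⟩ := ext_two hs (some_ne hab) h1
    refine Or.inl ⟨d, e, a, b, some_ne hde, (some_ne had).symm, (some_ne hbd).symm,
      (some_ne hae).symm, (some_ne hbe).symm, some_ne hab, e4, e5, e1, ?_⟩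
    rw [hs.mult_eq_one hb hd (some_ne hbd)]
  | some a, some b, some c, none, some e =>
    have hc := extN' (u := u) (v := v) (w := w) (le_trans one_le_two h3)
    have he := extN (u := u) (v := v) (w := w) (le_trans one_le_two h4)
    obtain ⟨e5, _⟩ := ext_two hs ((some_ne hae).symm) h5
    obtain ⟨e1, _⟩ := ext_two hs (some_ne hab) h1
    obtain ⟨e2, _⟩ := ext_two hs (some_ne hbc) h2
    refine Or.inl ⟨e, a, b, c, (some_ne hae).symm, (some_ne hbe).symm, (some_ne hce).symm,
      some_ne hab, some_ne hac, some_ne hbc, e5, e1, e2, ?_⟩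
    rw [hs.mult_eq_one hc he (some_ne hce)]
  | some a, some b, some c, some d, none =>
    have hd := extN' (u := u) (v := v) (w := w) (le_trans one_le_two h4)
    have ha := extN (u := u) (v := v) (w := w) (le_trans one_le_two h5)
    obtain ⟨e1, _⟩ := ext_two hs (some_ne hab) h1
    obtain ⟨e2, _⟩ := ext_two hs (some_ne hbc) h2
    obtain ⟨e3, _⟩ := ext_two hs (some_ne hcd) h3
    refine Or.inl ⟨a, b, c, d, some_ne hab, some_ne hac, some_ne had,
      some_ne hbc, some_ne hbd, some_ne hcd, e1, e2, e3, ?_⟩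
    rw [hs.mult_eq_one hd ha ((some_ne had).symm)]
  | some a, some b, some c, some d, some e =>
    exact Or.inr ⟨a, b, c, d, e, some_ne hab, some_ne hac, some_ne had, some_ne hae,
      some_ne hbc, some_ne hbd, some_ne hbe, some_ne hcd, some_ne hce, some_ne hde,
      (ext_two hs (some_ne hab) h1).1, (ext_two hs (some_ne hbc) h2).1,
      (ext_two hs (some_ne hcd) h3).1, (ext_two hs (some_ne hde) h4).1,
      (ext_two hs ((some_ne hae).symm) h5).1⟩

end DeltaYYBad2

end MG
end
noncomputable section
namespace MG

section DeltaYYBad3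

variable {H : MG} {u v w : H.V}

/-- Backward: a bad triangle in `H` yields a bad pattern in the Δ-YY transform. -/
lemma badT_to_deltaYY (hs : H.SDelta u v w) (h : H.BadT) :
    (H.deltaYY u v w).BadT ∨ (H.deltaYY u v w).BadS := by
  obtain ⟨a, b, c, hab, hac, hbc, h2, h1a, h1b⟩ := h
  by_cases c1 : Ext3 u v w a ∧ Ext3 u v w b
  · rw [hs.mult_eq_one c1.1 c1.2 hab] at h2; omega
  by_cases c2 : Ext3 u v w a ∧ Ext3 u v w c
  · have hnb : ¬ Ext3 u v w b := fun hb => c1 ⟨c2.1, hb⟩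
    refine Or.inr ⟨some b, some a, none, some c, sne hab.symm, snn b, sne hbc,
      snn a, sne hac, nns c, ?_, ?_, ?_, ?_⟩
    · rw [mult'_of_not (fun hh => hnb hh.1), H.symm]; exact h2
    · rw [mult'_sn_ext c2.1]
    · rw [mult'_ns_ext c2.2]
    · rw [mult'_of_not (fun hh => hnb hh.2), H.symm]; exact h1b
  by_cases c3 : Ext3 u v w b ∧ Ext3 u v w c
  · have hna : ¬ Ext3 u v w a := fun ha => c1 ⟨ha, c3.1⟩
    refine Or.inr ⟨some a, some b, none, some c, sne hab, snn a, sne hac,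
      snn b, sne hbc, nns c, ?_, ?_, ?_, ?_⟩
    · rw [mult'_of_not c1]; exact h2
    · rw [mult'_sn_ext c3.1]
    · rw [mult'_ns_ext c3.2]
    · rw [mult'_of_not (fun hh => hna hh.2), H.symm]; exact h1a
  · exact Or.inl ⟨some a, some b, some c, sne hab, sne hac, sne hbc,
      by rw [mult'_of_not c1]; exact h2,
      by rw [mult'_of_not c2]; exact h1a,
      by rw [mult'_of_not c3]; exact h1b⟩

/-- Backward: a bad square in `H` yields a bad pattern in the Δ-YY transform. -/
lemma badS_to_deltaYY (hs : H.SDelta u v w) (h : H.BadS) :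
    (H.deltaYY u v w).BadS ∨ (H.deltaYY u v w).BadP := by
  obtain ⟨a, b, c, d, hab, hac, had, hbc, hbd, hcd, h1, h2, h3, h4⟩ := h
  have nab : ¬ (Ext3 u v w a ∧ Ext3 u v w b) := fun hh => by
    rw [hs.mult_eq_one hh.1 hh.2 hab] at h1; omega
  have nbc : ¬ (Ext3 u v w b ∧ Ext3 u v w c) := fun hh => by
    rw [hs.mult_eq_one hh.1 hh.2 hbc] at h2; omega
  have ncd : ¬ (Ext3 u v w c ∧ Ext3 u v w d) := fun hh => by
    rw [hs.mult_eq_one hh.1 hh.2 hcd] at h3; omega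
  by_cases cda : Ext3 u v w d ∧ Ext3 u v w a
  · refine Or.inr ⟨some a, some b, some c, some d, none, sne hab, sne hac, sne had,
      snn a, sne hbc, sne hbd, snn b, sne hcd, snn c, snn d, ?_, ?_, ?_, ?_, ?_⟩
    · rw [mult'_of_not nab]; exact h1
    · rw [mult'_of_not nbc]; exact h2
    · rw [mult'_of_not ncd]; exact h3
    · rw [mult'_sn_ext cda.1]
    · rw [mult'_ns_ext cda.2]
  · exact Or.inl ⟨some a, some b, some c, some d, sne hab, sne hac, sne had,
      sne hbc, sne hbd, sne hcd,
      by rw [mult'_of_not nab]; exact h1,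
      by rw [mult'_of_not nbc]; exact h2,
      by rw [mult'_of_not ncd]; exact h3,
      by rw [mult'_of_not cda]; exact h4⟩

/-- Backward: a bad pentagon in `H` yields a bad pentagon in the Δ-YY transform. -/
lemma badP_to_deltaYY (hs : H.SDelta u v w) (h : H.BadP) : (H.deltaYY u v w).BadP := by
  obtain ⟨a, b, c, d, e, hab, hac, had, hae, hbc, hbd, hbe, hcd, hce, hde,
    h1, h2, h3, h4, h5⟩ := h
  have nab : ¬ (Ext3 u v w a ∧ Ext3 u v w b) := fun hh => by
    rw [hs.mult_eq_one hh.1 hh.2 hab] at h1; omega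
  have nbc : ¬ (Ext3 u v w b ∧ Ext3 u v w c) := fun hh => by
    rw [hs.mult_eq_one hh.1 hh.2 hbc] at h2; omega
  have ncd : ¬ (Ext3 u v w c ∧ Ext3 u v w d) := fun hh => by
    rw [hs.mult_eq_one hh.1 hh.2 hcd] at h3; omega
  have nde : ¬ (Ext3 u v w d ∧ Ext3 u v w e) := fun hh => by
    rw [hs.mult_eq_one hh.1 hh.2 hde] at h4; omega
  have nea : ¬ (Ext3 u v w e ∧ Ext3 u v w a) := fun hh => by
    rw [hs.mult_eq_one hh.1 hh.2 hae.symm] at h5; omega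
  exact ⟨some a, some b, some c, some d, some e, sne hab, sne hac, sne had, sne hae,
    sne hbc, sne hbd, sne hbe, sne hcd, sne hce, sne hde,
    by rw [mult'_of_not nab]; exact h1,
    by rw [mult'_of_not nbc]; exact h2,
    by rw [mult'_of_not ncd]; exact h3,
    by rw [mult'_of_not nde]; exact h4,
    by rw [mult'_of_not nea]; exact h5⟩

/-- Δ-YY transformation on a simple delta preserves goodness, in both directions. -/
lemma goodG_deltaYY_iff (hs : H.SDelta u v w) :
    (H.deltaYY u v w).GoodG ↔ H.GoodG := by
  constructor
  · rintro ⟨g1, g2, g3⟩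
    refine ⟨fun h => ?_, fun h => ?_, fun h => ?_⟩
    · rcases badT_to_deltaYY hs h with h' | h' <;> [exact g1 h'; exact g2 h']
    · rcases badS_to_deltaYY hs h with h' | h' <;> [exact g2 h'; exact g3 h']
    · exact g3 (badP_to_deltaYY hs h)
  · rintro ⟨g1, g2, g3⟩
    refine ⟨fun h => g1 (badT_of_deltaYY hs h), fun h => ?_, fun h => ?_⟩
    · rcases badS_of_deltaYY hs h with h' | h' <;> [exact g1 h'; exact g2 h']
    · rcases badP_of_deltaYY hs h with h' | h' <;> [exact g2 h'; exact g3 h']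

end DeltaYYBad3

end MG
end
noncomputable section
namespace MG

/-- A wye whose external vertices are pairwise non-adjacent. -/
def NWye (H : MG) (x u v w : H.V) : Prop :=
  H.IsWye x u v w ∧ H.mult u v = 0 ∧ H.mult u w = 0 ∧ H.mult v w = 0

namespace NWye

variable {H : MG} {x u v w : H.V}

lemma uv (hn : H.NWye x u v w) : u ≠ v := hn.1.1
lemma uw (hn : H.NWye x u v w) : u ≠ w := hn.1.2.1
lemma vw (hn : H.NWye x u v w) : v ≠ w := hn.1.2.2.1
lemma xu (hn : H.NWye x u v w) : x ≠ u := hn.1.2.2.2.1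
lemma xv (hn : H.NWye x u v w) : x ≠ v := hn.1.2.2.2.2.1
lemma xw (hn : H.NWye x u v w) : x ≠ w := hn.1.2.2.2.2.2.1

lemma ext_two (hn : H.NWye x u v w) {y : H.V} (hy : Ext3 u v w y) : H.mult x y = 2 := by
  obtain ⟨_, _, _, _, _, _, h1, h2, h3, _⟩ := hn.1
  rcases hy with rfl | rfl | rfl <;> assumption

lemma ext_of (hn : H.NWye x u v w) {y : H.V} (hy : H.mult x y ≠ 0) : Ext3 u v w y := by
  obtain ⟨_, _, _, _, _, _, _, _, _, h0⟩ := hn.1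
  by_contra hc
  unfold Ext3 at hc
  push_neg at hc
  exact hy (h0 y hc.1 hc.2.1 hc.2.2)

lemma ext_of' (hn : H.NWye x u v w) {y : H.V} (hy : H.mult y x ≠ 0) : Ext3 u v w y :=
  hn.ext_of (by rwa [H.symm])

lemma nonadj (hn : H.NWye x u v w) {a b : H.V} (ha : Ext3 u v w a) (hb : Ext3 u v w b) (hab : a ≠ b) :
    H.mult a b = 0 := by
  obtain ⟨n1, n2, n3⟩ := hn.2
  rcases ha with rfl | rfl | rfl <;> rcases hb with rfl | rfl | rfl <;>
    first
      | exact absurd rfl hab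
      | assumption
      | (rw [H.symm]; assumption)

end NWye

section YYDeltaBad

variable {H : MG} {x u v w : H.V}

lemma vne {a b : {y : H.V // y ≠ x}} (h : a ≠ b) : a.1 ≠ b.1 :=
  fun hh => h (Subtype.ext hh)

lemma vne' {a b : {y : H.V // y ≠ x}} (h : a.1 ≠ b.1) : a ≠ b :=
  fun hh => h (congrArg Subtype.val hh)

lemma yyDelta_mult (H : MG) (x u v w : H.V) (a b : {y : H.V // y ≠ x}) :
    (H.yyDelta x u v w).mult a b =
      if a = b then 0 else H.mult a.1 b.1 + triCount u v w a.1 b.1 := rfl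

lemma yyDelta_mult_ne {a b : {y : H.V // y ≠ x}} (hab : a ≠ b) :
    (H.yyDelta x u v w).mult a b = H.mult a.1 b.1 + triCount u v w a.1 b.1 := by
  rw [yyDelta_mult, if_neg hab]

lemma yyDelta_mult_ge {a b : {y : H.V // y ≠ x}} (hab : a ≠ b) :
    H.mult a.1 b.1 ≤ (H.yyDelta x u v w).mult a b := by
  rw [yyDelta_mult_ne hab]; omega

lemma yyDelta_mult_ext {a b : {y : H.V // y ≠ x}} (hab : a ≠ b)
    (ha : Ext3 u v w a.1) (hb : Ext3 u v w b.1) :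
    1 ≤ (H.yyDelta x u v w).mult a b := by
  rw [yyDelta_mult_ne hab, triCount_eq_one ha hb (vne hab)]; omega

lemma yy_e2 (hn : H.NWye x u v w) {a b : {y : H.V // y ≠ x}} (hab : a ≠ b)
    (h : 2 ≤ (H.yyDelta x u v w).mult a b) :
    2 ≤ H.mult a.1 b.1 ∧ ¬ (Ext3 u v w a.1 ∧ Ext3 u v w b.1) := by
  rw [yyDelta_mult_ne hab] at h
  by_cases hc : Ext3 u v w a.1 ∧ Ext3 u v w b.1
  · rw [hn.nonadj hc.1 hc.2 (vne hab)] at h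
    have := triCount_le u v w a.1 b.1
    omega
  · rw [triCount_eq_zero hc] at h
    exact ⟨by omega, hc⟩

lemma yy_e1 (hn : H.NWye x u v w) {a b : {y : H.V // y ≠ x}} (hab : a ≠ b)
    (h : 1 ≤ (H.yyDelta x u v w).mult a b) :
    1 ≤ H.mult a.1 b.1 ∨ (Ext3 u v w a.1 ∧ Ext3 u v w b.1) := by
  by_cases hc : Ext3 u v w a.1 ∧ Ext3 u v w b.1
  · exact Or.inr hc
  · rw [yyDelta_mult_ne hab, triCount_eq_zero hc] at h
    exact Or.inl (by omega)

/-- Forward: a bad triangle in the YY-Δ transform yields a bad pattern in `H`. -/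
lemma badT_of_yyDelta (hn : H.NWye x u v w) (h : (H.yyDelta x u v w).BadT) :
    H.BadT ∨ H.BadS := by
  obtain ⟨a, b, c, hab, hac, hbc, h2, h1a, h1b⟩ := h
  obtain ⟨m2, nab⟩ := yy_e2 hn hab h2
  rcases yy_e1 hn hac h1a with hac1 | hacE
  · rcases yy_e1 hn hbc h1b with hbc1 | hbcE
    · exact Or.inl ⟨a.1, b.1, c.1, vne hab, vne hac, vne hbc, m2, hac1, hbc1⟩
    · refine Or.inr ⟨a.1, b.1, x, c.1, vne hab, a.2, vne hac, b.2, vne hbc,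
        (c.2).symm, m2, ?_, ?_, ?_⟩
      · rw [H.symm]; exact le_of_eq (hn.ext_two hbcE.1).symm
      · exact le_of_eq (hn.ext_two hbcE.2).symm
      · rw [H.symm]; exact hac1
  · rcases yy_e1 hn hbc h1b with hbc1 | hbcE
    · refine Or.inr ⟨b.1, a.1, x, c.1, (vne hab).symm, b.2, vne hbc, a.2, vne hac,
        (c.2).symm, ?_, ?_, ?_, ?_⟩
      · rw [H.symm]; exact m2
      · rw [H.symm]; exact le_of_eq (hn.ext_two hacE.1).symm
      · exact le_of_eq (hn.ext_two hacE.2).symm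
      · rw [H.symm]; exact hbc1
    · exact absurd ⟨hacE.1, hbcE.1⟩ nab

/-- Forward: a bad square in the YY-Δ transform yields a bad pattern in `H`. -/
lemma badS_of_yyDelta (hn : H.NWye x u v w) (h : (H.yyDelta x u v w).BadS) :
    H.BadS ∨ H.BadP := by
  obtain ⟨a, b, c, d, hab, hac, had, hbc, hbd, hcd, h1, h2, h3, h4⟩ := h
  obtain ⟨m1, _⟩ := yy_e2 hn hab h1
  obtain ⟨m2, _⟩ := yy_e2 hn hbc h2
  obtain ⟨m3, _⟩ := yy_e2 hn hcd h3
  rcases yy_e1 hn (fun hh => had (hh.symm)) h4 with h4' | hE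
  · exact Or.inl ⟨a.1, b.1, c.1, d.1, vne hab, vne hac, vne had, vne hbc, vne hbd,
      vne hcd, m1, m2, m3, h4'⟩
  · refine Or.inr ⟨a.1, b.1, c.1, d.1, x, vne hab, vne hac, vne had, a.2, vne hbc,
      vne hbd, b.2, vne hcd, c.2, d.2, m1, m2, m3, ?_, ?_⟩
    · rw [H.symm]; exact le_of_eq (hn.ext_two hE.1).symm
    · exact le_of_eq (hn.ext_two hE.2).symm

/-- Forward: a bad pentagon in the YY-Δ transform yields a bad pentagon in `H`. -/
lemma badP_of_yyDelta (hn : H.NWye x u v w) (h : (H.yyDelta x u v w).BadP) :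
    H.BadP := by
  obtain ⟨a, b, c, d, e, hab, hac, had, hae, hbc, hbd, hbe, hcd, hce, hde,
    h1, h2, h3, h4, h5⟩ := h
  exact ⟨a.1, b.1, c.1, d.1, e.1, vne hab, vne hac, vne had, vne hae, vne hbc,
    vne hbd, vne hbe, vne hcd, vne hce, vne hde,
    (yy_e2 hn hab h1).1, (yy_e2 hn hbc h2).1, (yy_e2 hn hcd h3).1,
    (yy_e2 hn hde h4).1, (yy_e2 hn (fun hh => hae hh.symm) h5).1⟩

end YYDeltaBad

end MG
end
noncomputable section
namespace MG

section YYDeltaBad2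

variable {H : MG} {x u v w : H.V}

lemma yyDelta_mult_ge' {a b : H.V} (ha : a ≠ x) (hb : b ≠ x) (hab : a ≠ b) :
    H.mult a b ≤ (H.yyDelta x u v w).mult ⟨a, ha⟩ ⟨b, hb⟩ := by
  rw [yyDelta_mult, if_neg (show (⟨a, ha⟩ : {y : H.V // y ≠ x}) ≠ ⟨b, hb⟩ from
    fun hh => hab (congrArg Subtype.val hh))]
  simp only
  omega

lemma yyDelta_mult_ext' {a b : H.V} (ha : a ≠ x) (hb : b ≠ x) (hab : a ≠ b)
    (hea : Ext3 u v w a) (heb : Ext3 u v w b) :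
    1 ≤ (H.yyDelta x u v w).mult ⟨a, ha⟩ ⟨b, hb⟩ := by
  rw [yyDelta_mult, if_neg (show (⟨a, ha⟩ : {y : H.V // y ≠ x}) ≠ ⟨b, hb⟩ from
    fun hh => hab (congrArg Subtype.val hh))]
  simp only
  rw [triCount_eq_one hea heb hab]
  omega

/-- Backward: a bad triangle in `H` yields a bad triangle in the YY-Δ transform. -/
lemma badT_to_yyDelta (hn : H.NWye x u v w) (h : H.BadT) :
    (H.yyDelta x u v w).BadT := by
  obtain ⟨a, b, c, hab, hac, hbc, h2, h1a, h1b⟩ := h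
  by_cases hax : a = x
  · rw [hax] at h2 h1a
    have hb := hn.ext_of (y := b) (by omega)
    have hc := hn.ext_of (y := c) (by omega)
    rw [hn.nonadj hb hc hbc] at h1b; omega
  by_cases hbx : b = x
  · rw [hbx] at h2 h1b
    have ha := hn.ext_of' (y := a) (by omega)
    have hc := hn.ext_of (y := c) (by omega)
    rw [hn.nonadj ha hc hac] at h1a; omega
  by_cases hcx : c = x
  · rw [hcx] at h1a h1b
    have ha := hn.ext_of' (y := a) (by omega)
    have hb := hn.ext_of' (y := b) (by omega)
    rw [hn.nonadj ha hb hab] at h2; omega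
  · exact ⟨⟨a, hax⟩, ⟨b, hbx⟩, ⟨c, hcx⟩, vne' hab, vne' hac, vne' hbc,
      le_trans h2 (yyDelta_mult_ge' hax hbx hab),
      le_trans h1a (yyDelta_mult_ge' hax hcx hac),
      le_trans h1b (yyDelta_mult_ge' hbx hcx hbc)⟩

/-- Backward: a bad square in `H` yields a bad pattern in the YY-Δ transform. -/
lemma badS_to_yyDelta (hn : H.NWye x u v w) (h : H.BadS) :
    (H.yyDelta x u v w).BadT ∨ (H.yyDelta x u v w).BadS := by
  obtain ⟨a, b, c, d, hab, hac, had, hbc, hbd, hcd, h1, h2, h3, h4⟩ := h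
  by_cases hax : a = x
  · rw [hax] at h1 h4 hab hac had
    have hb := hn.ext_of (y := b) (by omega)
    have hd := hn.ext_of' (y := d) (by omega)
    exact Or.inl ⟨⟨b, hab.symm⟩, ⟨c, hac.symm⟩, ⟨d, had.symm⟩, vne' hbc, vne' hbd,
      vne' hcd, le_trans h2 (yyDelta_mult_ge' hab.symm hac.symm hbc),
      yyDelta_mult_ext' hab.symm had.symm hbd hb hd,
      le_trans (le_trans one_le_two h3) (yyDelta_mult_ge' hac.symm had.symm hcd)⟩
  by_cases hbx : b = x
  · rw [hbx] at h1 h2 hab hbc hbd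
    have ha := hn.ext_of' (y := a) (by omega)
    have hc := hn.ext_of (y := c) (by omega)
    exact Or.inl ⟨⟨c, hbc.symm⟩, ⟨d, hbd.symm⟩, ⟨a, hax⟩, vne' hcd, vne' hac.symm,
      vne' had.symm, le_trans h3 (yyDelta_mult_ge' hbc.symm hbd.symm hcd),
      yyDelta_mult_ext' hbc.symm hax hac.symm hc ha,
      le_trans h4 (yyDelta_mult_ge' hbd.symm hax had.symm)⟩
  by_cases hcx : c = x
  · rw [hcx] at h2 h3 hac hbc hcd
    have hb := hn.ext_of' (y := b) (by omega)
    have hd := hn.ext_of (y := d) (by omega)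
    have h4' : 1 ≤ H.mult a d := by rw [H.symm]; exact h4
    exact Or.inl ⟨⟨a, hax⟩, ⟨b, hbx⟩, ⟨d, hcd.symm⟩, vne' hab, vne' had, vne' hbd,
      le_trans h1 (yyDelta_mult_ge' hax hbx hab),
      le_trans h4' (yyDelta_mult_ge' hax hcd.symm had),
      yyDelta_mult_ext' hbx hcd.symm hbd hb hd⟩
  by_cases hdx : d = x
  · rw [hdx] at h3 h4 had hbd hcd
    have hc := hn.ext_of' (y := c) (by omega)
    have ha := hn.ext_of (y := a) (by omega)
    have h1' : 2 ≤ H.mult b a := by rw [H.symm]; exact h1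
    exact Or.inl ⟨⟨b, hbx⟩, ⟨a, hax⟩, ⟨c, hcx⟩, vne' hab.symm, vne' hbc, vne' hac,
      le_trans h1' (yyDelta_mult_ge' hbx hax hab.symm),
      le_trans (le_trans one_le_two h2) (yyDelta_mult_ge' hbx hcx hbc),
      yyDelta_mult_ext' hax hcx hac ha hc⟩
  · exact Or.inr ⟨⟨a, hax⟩, ⟨b, hbx⟩, ⟨c, hcx⟩, ⟨d, hdx⟩, vne' hab, vne' hac,
      vne' had, vne' hbc, vne' hbd, vne' hcd,
      le_trans h1 (yyDelta_mult_ge' hax hbx hab),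
      le_trans h2 (yyDelta_mult_ge' hbx hcx hbc),
      le_trans h3 (yyDelta_mult_ge' hcx hdx hcd),
      le_trans h4 (yyDelta_mult_ge' hdx hax (fun hh => had hh.symm))⟩

/-- Backward: a bad pentagon in `H` yields a bad pattern in the YY-Δ transform. -/
lemma badP_to_yyDelta (hn : H.NWye x u v w) (h : H.BadP) :
    (H.yyDelta x u v w).BadS ∨ (H.yyDelta x u v w).BadP := by
  obtain ⟨a, b, c, d, e, hab, hac, had, hae, hbc, hbd, hbe, hcd, hce, hde,
    h1, h2, h3, h4, h5⟩ := h
  by_cases hax : a = x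
  · rw [hax] at h1 h5 hab hac had hae
    have hb := hn.ext_of (y := b) (by omega)
    have he := hn.ext_of' (y := e) (by omega)
    exact Or.inl ⟨⟨b, hab.symm⟩, ⟨c, hac.symm⟩, ⟨d, had.symm⟩, ⟨e, hae.symm⟩,
      vne' hbc, vne' hbd, vne' hbe, vne' hcd, vne' hce, vne' hde,
      le_trans h2 (yyDelta_mult_ge' hab.symm hac.symm hbc),
      le_trans h3 (yyDelta_mult_ge' hac.symm had.symm hcd),
      le_trans h4 (yyDelta_mult_ge' had.symm hae.symm hde),
      yyDelta_mult_ext' hae.symm hab.symm hbe.symm he hb⟩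
  by_cases hbx : b = x
  · rw [hbx] at h1 h2 hab hbc hbd hbe
    have ha := hn.ext_of' (y := a) (by omega)
    have hc := hn.ext_of (y := c) (by omega)
    exact Or.inl ⟨⟨c, hbc.symm⟩, ⟨d, hbd.symm⟩, ⟨e, hbe.symm⟩, ⟨a, hax⟩,
      vne' hcd, vne' hce, vne' hac.symm, vne' hde, vne' had.symm, vne' hae.symm,
      le_trans h3 (yyDelta_mult_ge' hbc.symm hbd.symm hcd),
      le_trans h4 (yyDelta_mult_ge' hbd.symm hbe.symm hde),
      le_trans h5 (yyDelta_mult_ge' hbe.symm hax hae.symm),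
      yyDelta_mult_ext' hax hbc.symm hac ha hc⟩
  by_cases hcx : c = x
  · rw [hcx] at h2 h3 hac hbc hcd hce
    have hb := hn.ext_of' (y := b) (by omega)
    have hd := hn.ext_of (y := d) (by omega)
    exact Or.inl ⟨⟨d, hcd.symm⟩, ⟨e, hce.symm⟩, ⟨a, hax⟩, ⟨b, hbx⟩,
      vne' hde, vne' had.symm, vne' hbd.symm, vne' hae.symm, vne' hbe.symm,
      vne' hab,
      le_trans h4 (yyDelta_mult_ge' hcd.symm hce.symm hde),
      le_trans h5 (yyDelta_mult_ge' hce.symm hax hae.symm),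
      le_trans h1 (yyDelta_mult_ge' hax hbx hab),
      yyDelta_mult_ext' hbx hcd.symm hbd hb hd⟩
  by_cases hdx : d = x
  · rw [hdx] at h3 h4 had hbd hcd hde
    have hc := hn.ext_of' (y := c) (by omega)
    have he := hn.ext_of (y := e) (by omega)
    exact Or.inl ⟨⟨e, hde.symm⟩, ⟨a, hax⟩, ⟨b, hbx⟩, ⟨c, hcx⟩,
      vne' hae.symm, vne' hbe.symm, vne' hce.symm, vne' hab, vne' hac, vne' hbc,
      le_trans h5 (yyDelta_mult_ge' hde.symm hax hae.symm),
      le_trans h1 (yyDelta_mult_ge' hax hbx hab),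
      le_trans h2 (yyDelta_mult_ge' hbx hcx hbc),
      yyDelta_mult_ext' hcx hde.symm hce hc he⟩
  by_cases hex : e = x
  · rw [hex] at h4 h5 hae hbe hce hde
    have hd := hn.ext_of' (y := d) (by omega)
    have ha := hn.ext_of (y := a) (by omega)
    exact Or.inl ⟨⟨a, hax⟩, ⟨b, hbx⟩, ⟨c, hcx⟩, ⟨d, hdx⟩,
      vne' hab, vne' hac, vne' had, vne' hbc, vne' hbd, vne' hcd,
      le_trans h1 (yyDelta_mult_ge' hax hbx hab),
      le_trans h2 (yyDelta_mult_ge' hbx hcx hbc),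
      le_trans h3 (yyDelta_mult_ge' hcx hdx hcd),
      yyDelta_mult_ext' hdx hax (fun hh => had hh.symm) hd ha⟩
  · exact Or.inr ⟨⟨a, hax⟩, ⟨b, hbx⟩, ⟨c, hcx⟩, ⟨d, hdx⟩, ⟨e, hex⟩,
      vne' hab, vne' hac, vne' had, vne' hae, vne' hbc, vne' hbd, vne' hbe,
      vne' hcd, vne' hce, vne' hde,
      le_trans h1 (yyDelta_mult_ge' hax hbx hab),
      le_trans h2 (yyDelta_mult_ge' hbx hcx hbc),
      le_trans h3 (yyDelta_mult_ge' hcx hdx hcd),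
      le_trans h4 (yyDelta_mult_ge' hdx hex hde),
      le_trans h5 (yyDelta_mult_ge' hex hax (fun hh => hae hh.symm))⟩

/-- YY-Δ transformation preserves goodness, in both directions. -/
lemma goodG_yyDelta_iff (hn : H.NWye x u v w) :
    (H.yyDelta x u v w).GoodG ↔ H.GoodG := by
  constructor
  · rintro ⟨g1, g2, g3⟩
    refine ⟨fun h => g1 (badT_to_yyDelta hn h), fun h => ?_, fun h => ?_⟩
    · rcases badS_to_yyDelta hn h with h' | h' <;> [exact g1 h'; exact g2 h']
    · rcases badP_to_yyDelta hn h with h' | h' <;> [exact g2 h'; exact g3 h']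
  · rintro ⟨g1, g2, g3⟩
    refine ⟨fun h => ?_, fun h => ?_, fun h => g3 (badP_of_yyDelta hn h)⟩
    · rcases badT_of_yyDelta hn h with h' | h' <;> [exact g1 h'; exact g2 h']
    · rcases badS_of_yyDelta hn h with h' | h' <;> [exact g2 h'; exact g3 h']

end YYDeltaBad2

end MG
end
noncomputable section
namespace MG

lemma multS_mk (G : MG) (a b : G.V) : G.multS s(a, b) = G.mult a b := rfl

section NumConnDelta

variable {H : MG} {u v w : H.V}

lemma deltaYY_multS_nn (H : MG) (u v w : H.V) :
    (H.deltaYY u v w).multS (s(none, none) : Sym2 (Option H.V)) = 0 := rfl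

lemma deltaYY_multS_ns (H : MG) (u v w b : H.V) :
    (H.deltaYY u v w).multS (s(none, some b) : Sym2 (Option H.V))
      = if b = u ∨ b = v ∨ b = w then 2 else 0 := rfl

lemma deltaYY_multS_sn (H : MG) (u v w a : H.V) :
    (H.deltaYY u v w).multS (s(some a, none) : Sym2 (Option H.V))
      = if a = u ∨ a = v ∨ a = w then 2 else 0 := rfl

lemma deltaYY_multS_ss (H : MG) (u v w a b : H.V) :
    (H.deltaYY u v w).multS (s(some a, some b) : Sym2 (Option H.V))
      = H.mult a b - triCount u v w a b := rfl

lemma mem_image_some_iff {S : Set (Sym2 H.V)} {a b : H.V} :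
    s(some a, some b) ∈ Sym2.map some '' S ↔ s(a, b) ∈ S := by
  constructor
  · rintro ⟨q, hq, hmap⟩
    induction q using Sym2.ind with
    | _ y z =>
      rw [Sym2.map_pair_eq, Sym2.eq_iff] at hmap
      rcases hmap with ⟨h1, h2⟩ | ⟨h1, h2⟩
      · rw [Option.some.inj h1, Option.some.inj h2] at hq; exact hq
      · rw [Option.some.inj h1, Option.some.inj h2] at hq
        rwa [Sym2.eq_swap]
  · intro h
    exact ⟨s(a, b), h, Sym2.map_pair_eq _ _ _⟩

lemma img_no_none {S : Set (Sym2 H.V)} {p : Sym2 (Option H.V)}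
    (hp : p ∈ Sym2.map some '' S) : ¬ ((none : Option H.V) ∈ p) := by
  intro hn
  obtain ⟨q, _, rfl⟩ := hp
  rw [Sym2.mem_map] at hn
  obtain ⟨a, _, ha⟩ := hn
  exact Option.some_ne_none a ha

lemma mult_eq_one_of_memD (hs : H.SDelta u v w) {a b : H.V}
    (hd : s(a, b) ∈ ({s(u, v), s(u, w), s(v, w)} : Set (Sym2 H.V))) :
    H.mult a b = 1 := by
  rw [mem_tripairs_iff] at hd
  obtain ⟨_, _, _, e1, e2, e3⟩ := hs
  rcases hd with ⟨rfl, rfl⟩ | ⟨rfl, rfl⟩ | ⟨rfl, rfl⟩ | ⟨rfl, rfl⟩ | ⟨rfl, rfl⟩ | ⟨rfl, rfl⟩ <;>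
    first | assumption | (rw [H.symm]; assumption)

lemma deltaYY_conn_set (hs : H.SDelta u v w) :
    {p : Sym2 (Option H.V) | (H.deltaYY u v w).multS p ≠ 0}
      = (Sym2.map some '' ({p : Sym2 H.V | H.multS p ≠ 0}
          \ {s(u, v), s(u, w), s(v, w)}))
        ∪ {s((none : Option H.V), some u), s(none, some v), s(none, some w)} := by
  ext p
  induction p using Sym2.ind with
  | _ y z =>
    match y, z with
    | none, none =>
      simp only [Set.mem_setOf_eq, deltaYY_multS_nn, ne_eq, eq_self_iff_true, not_true_eq_false, false_iff,
        Set.mem_union, Set.mem_insert_iff, Set.mem_singleton_iff]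
      rintro (h | h | h | h)
      · exact img_no_none h (Sym2.mem_mk_left _ _)
      · simp [Sym2.eq_iff] at h
      · simp [Sym2.eq_iff] at h
      · simp [Sym2.eq_iff] at h
    | none, some b =>
      have himg : s((none : Option H.V), some b) ∉ Sym2.map some ''
          ({p : Sym2 H.V | H.multS p ≠ 0} \ {s(u, v), s(u, w), s(v, w)}) :=
        fun hp => img_no_none hp (Sym2.mem_mk_left _ _)
      simp only [Set.mem_setOf_eq, deltaYY_multS_ns, Set.mem_union,
        Set.mem_insert_iff, Set.mem_singleton_iff, Sym2.eq_iff]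
      constructor
      · intro h
        right
        by_cases hb : b = u ∨ b = v ∨ b = w
        · rcases hb with rfl | rfl | rfl <;> simp
        · rw [if_neg hb] at h; exact absurd rfl h
      · rintro (h | h)
        · exact absurd h himg
        · have hb : b = u ∨ b = v ∨ b = w := by
            rcases h with h | h | h <;> simp at h <;> tauto
          rw [if_pos hb]; omega
    | some a, none =>
      have himg : s(some a, (none : Option H.V)) ∉ Sym2.map some ''
          ({p : Sym2 H.V | H.multS p ≠ 0} \ {s(u, v), s(u, w), s(v, w)}) :=
        fun hp => img_no_none hp (Sym2.mem_mk_right _ _)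
      simp only [Set.mem_setOf_eq, deltaYY_multS_sn, Set.mem_union,
        Set.mem_insert_iff, Set.mem_singleton_iff, Sym2.eq_iff]
      constructor
      · intro h
        right
        by_cases ha : a = u ∨ a = v ∨ a = w
        · rcases ha with rfl | rfl | rfl <;> simp
        · rw [if_neg ha] at h; exact absurd rfl h
      · rintro (h | h)
        · exact absurd h himg
        · have ha : a = u ∨ a = v ∨ a = w := by
            rcases h with h | h | h <;> simp at h <;> tauto
          rw [if_pos ha]; omega
    | some a, some b =>
      have hE : s(some a, some b) ∈
          ({s((none : Option H.V), some u), s(none, some v), s(none, some w)} :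
            Set (Sym2 (Option H.V))) ↔ False := by
        simp [Sym2.eq_iff]
      simp only [Set.mem_setOf_eq, deltaYY_multS_ss, Set.mem_union,
        mem_image_some_iff, Set.mem_diff, hE, or_false]
      unfold triCount
      by_cases hd : s(a, b) ∈ ({s(u, v), s(u, w), s(v, w)} : Set (Sym2 H.V))
      · rw [if_pos hd, mult_eq_one_of_memD hs hd]
        simp only [Set.mem_setOf_eq, multS_mk]
        simp [hd, mult_eq_one_of_memD hs hd]
      · rw [if_neg hd]
        simp only [Set.mem_setOf_eq, multS_mk]
        simp [hd]

lemma numConn_deltaYY (hs : H.SDelta u v w) :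
    (H.deltaYY u v w).numConn = H.numConn := by
  classical
  haveI := H.fin
  haveI : Finite H.V := Finite.of_fintype _
  have hD3 : ({s(u, v), s(u, w), s(v, w)} : Set (Sym2 H.V)).ncard = 3 := by
    obtain ⟨huv, huw, hvw, e1, e2, e3⟩ := hs
    rw [Set.ncard_insert_of_notMem (by simp [Sym2.eq_iff]; tauto) (Set.toFinite _),
      Set.ncard_insert_of_notMem (by simp [Sym2.eq_iff]; tauto), Set.ncard_singleton]
  have hE3 : ({s((none : Option H.V), some u), s(none, some v), s(none, some w)} :
      Set (Sym2 (Option H.V))).ncard = 3 := by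
    obtain ⟨huv, huw, hvw, e1, e2, e3⟩ := hs
    rw [Set.ncard_insert_of_notMem (by simp [Sym2.eq_iff]; tauto) (Set.toFinite _),
      Set.ncard_insert_of_notMem (by simp [Sym2.eq_iff]; tauto), Set.ncard_singleton]
  have hDN : ({s(u, v), s(u, w), s(v, w)} : Set (Sym2 H.V))
      ⊆ {p : Sym2 H.V | H.multS p ≠ 0} := by
    intro p hp
    simp only [Set.mem_insert_iff, Set.mem_singleton_iff] at hp
    obtain ⟨huv, huw, hvw, e1, e2, e3⟩ := hs
    rcases hp with rfl | rfl | rfl <;>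
      (simp only [Set.mem_setOf_eq, multS_mk] <;> omega)
  have hdisj : Disjoint (Sym2.map some '' ({p : Sym2 H.V | H.multS p ≠ 0}
      \ {s(u, v), s(u, w), s(v, w)}))
      ({s((none : Option H.V), some u), s(none, some v), s(none, some w)} :
        Set (Sym2 (Option H.V))) := by
    rw [Set.disjoint_right]
    intro p hp hp'
    have := img_no_none hp'
    simp only [Set.mem_insert_iff, Set.mem_singleton_iff] at hp
    rcases hp with rfl | rfl | rfl <;> exact this (Sym2.mem_mk_left _ _)
  have hkey := deltaYY_conn_set hs
  show ({p : Sym2 (Option H.V) | (H.deltaYY u v w).multS p ≠ 0}).ncard = H.numConn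
  rw [hkey, Set.ncard_union_eq hdisj (Set.toFinite _) (Set.toFinite _),
    Set.ncard_image_of_injective _ (Sym2.map.injective (Option.some_injective _)),
    Set.ncard_diff hDN (Set.toFinite _), hD3, hE3]
  have hle : 3 ≤ ({p : Sym2 H.V | H.multS p ≠ 0}).ncard := by
    rw [← hD3]
    exact Set.ncard_le_ncard hDN (Set.toFinite _)
  unfold numConn
  omega

end NumConnDelta

end MG
end
noncomputable section
namespace MG

section NumConnYY

variable {H : MG} {x u v w : H.V}

lemma yyDelta_multS (H : MG) (x u v w : H.V) (a b : {y : H.V // y ≠ x}) :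
    (H.yyDelta x u v w).multS (s(a, b) : Sym2 {y : H.V // y ≠ x}) =
      if a = b then 0 else H.mult a.1 b.1 + triCount u v w a.1 b.1 := rfl

lemma mem_image_val_iff {S : Set (Sym2 {y : H.V // y ≠ x})} {a b : H.V}
    (ha : a ≠ x) (hb : b ≠ x) :
    s(a, b) ∈ Sym2.map Subtype.val '' S ↔ (s(⟨a, ha⟩, ⟨b, hb⟩) : Sym2 {y : H.V // y ≠ x}) ∈ S := by
  constructor
  · rintro ⟨q, hq, hmap⟩
    induction q using Sym2.ind with
    | _ c d =>
      rw [Sym2.map_pair_eq, Sym2.eq_iff] at hmap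
      rcases hmap with ⟨h1, h2⟩ | ⟨h1, h2⟩
      · have he : (s(⟨a, ha⟩, ⟨b, hb⟩) : Sym2 {y : H.V // y ≠ x}) = s(c, d) :=
          Sym2.eq_iff.mpr (Or.inl ⟨Subtype.ext h1.symm, Subtype.ext h2.symm⟩)
        rw [he]; exact hq
      · have he : (s(⟨a, ha⟩, ⟨b, hb⟩) : Sym2 {y : H.V // y ≠ x}) = s(c, d) :=
          Sym2.eq_iff.mpr (Or.inr ⟨Subtype.ext h2.symm, Subtype.ext h1.symm⟩)
        rw [he]; exact hq
  · intro h
    exact ⟨_, h, by rw [Sym2.map_pair_eq]⟩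

lemma x_not_in_image {S : Set (Sym2 {y : H.V // y ≠ x})} {p : Sym2 H.V}
    (hp : p ∈ Sym2.map Subtype.val '' S) : ¬ (x ∈ p) := by
  intro hx
  obtain ⟨q, _, rfl⟩ := hp
  rw [Sym2.mem_map] at hx
  obtain ⟨c, _, hc⟩ := hx
  exact c.2 hc

lemma mult_eq_zero_of_memD (hn : H.NWye x u v w) {a b : H.V}
    (hd : s(a, b) ∈ ({s(u, v), s(u, w), s(v, w)} : Set (Sym2 H.V))) :
    H.mult a b = 0 := by
  rw [mem_tripairs_iff] at hd
  obtain ⟨n1, n2, n3⟩ := hn.2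
  rcases hd with ⟨rfl, rfl⟩ | ⟨rfl, rfl⟩ | ⟨rfl, rfl⟩ | ⟨rfl, rfl⟩ | ⟨rfl, rfl⟩ | ⟨rfl, rfl⟩ <;>
    first | assumption | (rw [H.symm]; assumption)

lemma yyDelta_conn_set (hn : H.NWye x u v w) :
    Sym2.map Subtype.val ''
        {p : Sym2 {y : H.V // y ≠ x} | (H.yyDelta x u v w).multS p ≠ 0}
      = ({p : Sym2 H.V | H.multS p ≠ 0} \ {s(x, u), s(x, v), s(x, w)})
        ∪ {s(u, v), s(u, w), s(v, w)} := by
  have hxu := hn.xu; have hxv := hn.xv; have hxw := hn.xw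
  have huv := hn.uv; have huw := hn.uw; have hvw := hn.vw
  have hxmem : ∀ t : H.V, ((s(x, t) : Sym2 H.V) ∈
      (({p : Sym2 H.V | H.multS p ≠ 0} \ {s(x, u), s(x, v), s(x, w)})
        ∪ {s(u, v), s(u, w), s(v, w)}) ↔ False) := by
    intro t
    simp only [Set.mem_union, Set.mem_diff, Set.mem_setOf_eq, Set.mem_insert_iff,
      Set.mem_singleton_iff, Sym2.eq_iff, multS_mk, iff_false]
    rintro (⟨h1, h2⟩ | h | h | h)
    · have ht := hn.ext_of (y := t) h1
      rcases ht with rfl | rfl | rfl <;> tauto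
    · rcases h with ⟨h, _⟩ | ⟨h, _⟩ <;> [exact hxu h; exact hxv h]
    · rcases h with ⟨h, _⟩ | ⟨h, _⟩ <;> [exact hxu h; exact hxw h]
    · rcases h with ⟨h, _⟩ | ⟨h, _⟩ <;> [exact hxv h; exact hxw h]
  ext p
  induction p using Sym2.ind with
  | _ a b =>
    by_cases hax : a = x
    · rw [hax]
      rw [hxmem b, iff_false]
      intro h
      exact x_not_in_image h (Sym2.mem_mk_left _ _)
    by_cases hbx : b = x
    · rw [hbx, Sym2.eq_swap, hxmem a, iff_false]
      intro h
      exact x_not_in_image h (Sym2.mem_mk_left _ _)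
    · rw [mem_image_val_iff hax hbx]
      simp only [Set.mem_setOf_eq, yyDelta_multS, Set.mem_union, Set.mem_diff,
        Set.mem_insert_iff, Set.mem_singleton_iff, multS_mk]
      by_cases hab : a = b
      · subst hab
        rw [if_pos rfl]
        simp only [ne_eq, eq_self_iff_true, not_true_eq_false, false_iff]
        rw [H.loopless]
        rintro (⟨h, _⟩ | h | h | h)
        · exact h rfl
        all_goals rw [Sym2.eq_iff] at h
        · rcases h with ⟨rfl, rfl⟩ | ⟨rfl, rfl⟩ <;> [exact huv rfl; exact huv rfl]
        · rcases h with ⟨rfl, rfl⟩ | ⟨rfl, rfl⟩ <;> [exact huw rfl; exact huw rfl]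
        · rcases h with ⟨rfl, rfl⟩ | ⟨rfl, rfl⟩ <;> [exact hvw rfl; exact hvw rfl]
      · rw [if_neg (fun hh => hab (congrArg Subtype.val hh))]
        have hXfalse : ¬ (s(a, b) = s(x, u) ∨ s(a, b) = s(x, v) ∨ s(a, b) = s(x, w)) := by
          rintro (h | h | h) <;> rw [Sym2.eq_iff] at h <;>
            rcases h with ⟨h1, h2⟩ | ⟨h1, h2⟩ <;>
            first | exact hax h1 | exact hbx h2
        by_cases hd : s(a, b) ∈ ({s(u, v), s(u, w), s(v, w)} : Set (Sym2 H.V))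
        · have htri : triCount u v w a b = 1 := if_pos hd
          rw [htri]
          simp only [Set.mem_insert_iff, Set.mem_singleton_iff] at hd
          constructor
          · intro _; right; exact hd
          · intro _; omega
        · have htri : triCount u v w a b = 0 := if_neg hd
          rw [htri]
          simp only [Set.mem_insert_iff, Set.mem_singleton_iff] at hd
          constructor
          · intro h; exact Or.inl ⟨by omega, hXfalse⟩
          · rintro (⟨h, _⟩ | h)
            · omega
            · exact absurd h hd

lemma numConn_yyDelta (hn : H.NWye x u v w) :
    (H.yyDelta x u v w).numConn = H.numConn := by
  classical
  haveI := H.fin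
  haveI : Finite H.V := Finite.of_fintype _
  have hxu := hn.xu; have hxv := hn.xv; have hxw := hn.xw
  have huv := hn.uv; have huw := hn.uw; have hvw := hn.vw
  have hX3 : ({s(x, u), s(x, v), s(x, w)} : Set (Sym2 H.V)).ncard = 3 := by
    rw [Set.ncard_insert_of_notMem (by simp [Sym2.eq_iff]; tauto) (Set.toFinite _),
      Set.ncard_insert_of_notMem (by simp [Sym2.eq_iff]; tauto), Set.ncard_singleton]
  have hD3 : ({s(u, v), s(u, w), s(v, w)} : Set (Sym2 H.V)).ncard = 3 := by
    rw [Set.ncard_insert_of_notMem (by simp [Sym2.eq_iff]; tauto) (Set.toFinite _),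
      Set.ncard_insert_of_notMem (by simp [Sym2.eq_iff]; tauto), Set.ncard_singleton]
  have hXN : ({s(x, u), s(x, v), s(x, w)} : Set (Sym2 H.V))
      ⊆ {p : Sym2 H.V | H.multS p ≠ 0} := by
    intro p hp
    simp only [Set.mem_insert_iff, Set.mem_singleton_iff] at hp
    rcases hp with rfl | rfl | rfl <;> simp only [Set.mem_setOf_eq, multS_mk] <;>
      [rw [hn.ext_two (Or.inl rfl)]; rw [hn.ext_two (Or.inr (Or.inl rfl))];
        rw [hn.ext_two (Or.inr (Or.inr rfl))]] <;> omega
  have hdisj : Disjoint (({p : Sym2 H.V | H.multS p ≠ 0}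
      \ {s(x, u), s(x, v), s(x, w)}))
      ({s(u, v), s(u, w), s(v, w)} : Set (Sym2 H.V)) := by
    rw [Set.disjoint_right]
    intro p hp hp'
    have h0 := mult_eq_zero_of_memD hn (a := u) (b := v)
    simp only [Set.mem_insert_iff, Set.mem_singleton_iff] at hp
    obtain ⟨n1, n2, n3⟩ := hn.2
    rcases hp with rfl | rfl | rfl <;>
      (simp only [Set.mem_diff, Set.mem_setOf_eq, multS_mk] at hp'; omega)
  have hkey := yyDelta_conn_set hn
  have himg : (Sym2.map Subtype.val ''
      {p : Sym2 {y : H.V // y ≠ x} | (H.yyDelta x u v w).multS p ≠ 0}).ncard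
      = {p : Sym2 {y : H.V // y ≠ x} | (H.yyDelta x u v w).multS p ≠ 0}.ncard :=
    Set.ncard_image_of_injective _ (Sym2.map.injective Subtype.val_injective)
  have hle : 3 ≤ ({p : Sym2 H.V | H.multS p ≠ 0}).ncard := by
    rw [← hX3]
    exact Set.ncard_le_ncard hXN (Set.toFinite _)
  have hmain : ({p : Sym2 {y : H.V // y ≠ x} | (H.yyDelta x u v w).multS p ≠ 0}).ncard
      = ({p : Sym2 H.V | H.multS p ≠ 0}).ncard := by
    rw [← himg, hkey, Set.ncard_union_eq hdisj (Set.toFinite _) (Set.toFinite _),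
      Set.ncard_diff hXN (Set.toFinite _), hX3, hD3]
    omega
  show ({p : Sym2 {y : H.V // y ≠ x} | (H.yyDelta x u v w).multS p ≠ 0}).ncard = H.numConn
  rw [hmain]
  rfl

end NumConnYY

end MG
end
noncomputable section
namespace MG

section IsoTransfer

lemma iso_symm {A B : MG} (h : A.Iso B) : B.Iso A := by
  obtain ⟨e, he⟩ := h
  refine ⟨e.symm, fun a b => ?_⟩
  rw [← he (e.symm a) (e.symm b), e.apply_symm_apply, e.apply_symm_apply]

lemma iso_badT {A B : MG} (h : A.Iso B) (hb : A.BadT) : B.BadT := by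
  obtain ⟨e, he⟩ := h
  obtain ⟨a, b, c, hab, hac, hbc, h1, h2, h3⟩ := hb
  exact ⟨e a, e b, e c, e.injective.ne hab, e.injective.ne hac, e.injective.ne hbc,
    by rw [he]; exact h1, by rw [he]; exact h2, by rw [he]; exact h3⟩

lemma iso_badS {A B : MG} (h : A.Iso B) (hb : A.BadS) : B.BadS := by
  obtain ⟨e, he⟩ := h
  obtain ⟨a, b, c, d, hab, hac, had, hbc, hbd, hcd, h1, h2, h3, h4⟩ := hb
  exact ⟨e a, e b, e c, e d, e.injective.ne hab, e.injective.ne hac, e.injective.ne had,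
    e.injective.ne hbc, e.injective.ne hbd, e.injective.ne hcd,
    by rw [he]; exact h1, by rw [he]; exact h2, by rw [he]; exact h3, by rw [he]; exact h4⟩

lemma iso_badP {A B : MG} (h : A.Iso B) (hb : A.BadP) : B.BadP := by
  obtain ⟨e, he⟩ := h
  obtain ⟨a, b, c, d, f, hab, hac, had, hae, hbc, hbd, hbe, hcd, hce, hde,
    h1, h2, h3, h4, h5⟩ := hb
  exact ⟨e a, e b, e c, e d, e f, e.injective.ne hab, e.injective.ne hac,
    e.injective.ne had, e.injective.ne hae, e.injective.ne hbc, e.injective.ne hbd,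
    e.injective.ne hbe, e.injective.ne hcd, e.injective.ne hce, e.injective.ne hde,
    by rw [he]; exact h1, by rw [he]; exact h2, by rw [he]; exact h3,
    by rw [he]; exact h4, by rw [he]; exact h5⟩

lemma iso_goodG {A B : MG} (h : A.Iso B) : A.GoodG ↔ B.GoodG := by
  have h' := iso_symm h
  exact ⟨fun ⟨g1, g2, g3⟩ => ⟨fun hb => g1 (iso_badT h' hb), fun hb => g2 (iso_badS h' hb),
      fun hb => g3 (iso_badP h' hb)⟩,
    fun ⟨g1, g2, g3⟩ => ⟨fun hb => g1 (iso_badT h hb), fun hb => g2 (iso_badS h hb),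
      fun hb => g3 (iso_badP h hb)⟩⟩

lemma iso_numConn {A B : MG} (h : A.Iso B) : B.numConn = A.numConn := by
  obtain ⟨e, he⟩ := h
  have hm : ∀ a b : A.V, B.multS s(e a, e b) = A.multS s(a, b) := fun a b => by
    rw [multS_mk, multS_mk, he]
  have hset : {p : Sym2 B.V | B.multS p ≠ 0}
      = Sym2.map e '' {p : Sym2 A.V | A.multS p ≠ 0} := by
    ext p
    induction p using Sym2.ind with
    | _ y z =>
      constructor
      · intro hp
        refine ⟨s(e.symm y, e.symm z), ?_, ?_⟩
        · have : B.multS s(e (e.symm y), e (e.symm z)) ≠ 0 := by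
            rw [e.apply_symm_apply, e.apply_symm_apply]; exact hp
          rw [hm] at this
          exact this
        · rw [Sym2.map_pair_eq, e.apply_symm_apply, e.apply_symm_apply]
      · rintro ⟨q, hq, hmap⟩
        rw [← hmap]
        induction q using Sym2.ind with
        | _ c d =>
          rw [Set.mem_setOf_eq, Sym2.map_pair_eq, hm]
          exact hq
  unfold numConn
  rw [hset, Set.ncard_image_of_injective _ (Sym2.map.injective e.injective)]

end IsoTransfer

end MG
end
noncomputable section
namespace MG

section Assembly

lemma simple_goodG {G : MG} (hs : G.Simple) : G.GoodG := by
  refine ⟨fun ⟨a, b, _, _, _, _, h1, _, _⟩ => ?_,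
    fun ⟨a, b, _, _, _, _, _, _, _, _, h1, _, _, _⟩ => ?_,
    fun ⟨a, b, _, _, _, _, _, _, _, _, _, _, _, _, _, h1, _, _, _, _⟩ => ?_⟩ <;>
    (have := hs a b; omega)

lemma sdelta_of_good {A : MG} {u v w : A.V} (hd : A.IsDelta u v w) (hg : ¬ A.BadT) :
    A.SDelta u v w := by
  obtain ⟨huv, huw, hvw, a1, a2, a3⟩ := hd
  unfold Adj at a1 a2 a3
  have m1 : A.mult u v ≤ 1 := by
    by_contra hc
    exact hg ⟨u, v, w, huv, huw, hvw, by omega, by omega, by omega⟩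
  have m2 : A.mult u w ≤ 1 := by
    by_contra hc
    refine hg ⟨u, w, v, huw, huv, fun h => hvw h.symm, by omega, by omega, ?_⟩
    rw [A.symm]; omega
  have m3 : A.mult v w ≤ 1 := by
    by_contra hc
    refine hg ⟨v, w, u, hvw, fun h => huv h.symm, fun h => huw h.symm, by omega, ?_, ?_⟩
    · rw [A.symm]; omega
    · rw [A.symm]; omega
  exact ⟨huv, huw, hvw, by omega, by omega, by omega⟩

lemma sdelta_of_good' {A : MG} {u v w : A.V} (hd : A.IsDelta u v w)
    (hg : ¬ (A.deltaYY u v w).BadT) : A.SDelta u v w := by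
  obtain ⟨huv, huw, hvw, a1, a2, a3⟩ := hd
  unfold Adj at a1 a2 a3
  have eu : Ext3 u v w u := Or.inl rfl
  have ev : Ext3 u v w v := Or.inr (Or.inl rfl)
  have ew : Ext3 u v w w := Or.inr (Or.inr rfl)
  have m1 : A.mult u v ≤ 1 := by
    by_contra hc
    refine hg ⟨none, some u, some v, nns u, nns v, sne huv, ?_, ?_, ?_⟩
    · rw [mult'_ns_ext eu]
    · rw [mult'_ns_ext ev]; omega
    · rw [deltaYY_mult_ss, triCount_eq_one eu ev huv]; omega
  have m2 : A.mult u w ≤ 1 := by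
    by_contra hc
    refine hg ⟨none, some u, some w, nns u, nns w, sne huw, ?_, ?_, ?_⟩
    · rw [mult'_ns_ext eu]
    · rw [mult'_ns_ext ew]; omega
    · rw [deltaYY_mult_ss, triCount_eq_one eu ew huw]; omega
  have m3 : A.mult v w ≤ 1 := by
    by_contra hc
    refine hg ⟨none, some v, some w, nns v, nns w, sne hvw, ?_, ?_, ?_⟩
    · rw [mult'_ns_ext ev]
    · rw [mult'_ns_ext ew]; omega
    · rw [deltaYY_mult_ss, triCount_eq_one ev ew hvw]; omega
  exact ⟨huv, huw, hvw, by omega, by omega, by omega⟩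

lemma nwye_of_good {A : MG} {x u v w : A.V} (hw : A.IsWye x u v w) (hg : ¬ A.BadT) :
    A.NWye x u v w := by
  obtain ⟨huv, huw, hvw, hxu, hxv, hxw, m1, m2, m3, h0⟩ := hw
  have n1 : A.mult u v = 0 := by
    by_contra hc
    exact hg ⟨x, u, v, hxu, hxv, huv, by omega, by omega, by omega⟩
  have n2 : A.mult u w = 0 := by
    by_contra hc
    exact hg ⟨x, u, w, hxu, hxw, huw, by omega, by omega, by omega⟩
  have n3 : A.mult v w = 0 := by
    by_contra hc
    exact hg ⟨x, v, w, hxv, hxw, hvw, by omega, by omega, by omega⟩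
  exact ⟨⟨huv, huw, hvw, hxu, hxv, hxw, m1, m2, m3, h0⟩, n1, n2, n3⟩

lemma nwye_of_good' {A : MG} {x u v w : A.V} (hw : A.IsWye x u v w)
    (hg : ¬ (A.yyDelta x u v w).BadT) : A.NWye x u v w := by
  obtain ⟨huv, huw, hvw, hxu, hxv, hxw, m1, m2, m3, h0⟩ := hw
  have eu : Ext3 u v w u := Or.inl rfl
  have ev : Ext3 u v w v := Or.inr (Or.inl rfl)
  have ew : Ext3 u v w w := Or.inr (Or.inr rfl)
  have key : ∀ (a b c : A.V) (ha : a ≠ x) (hb : b ≠ x) (hc : c ≠ x),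
      a ≠ b → a ≠ c → b ≠ c → Ext3 u v w a → Ext3 u v w b → Ext3 u v w c →
      1 ≤ A.mult a b → False := by
    intro a b c ha hb hc hab hac hbc ea eb ec hm
    refine hg ⟨⟨a, ha⟩, ⟨b, hb⟩, ⟨c, hc⟩, vne' hab, vne' hac, vne' hbc, ?_, ?_, ?_⟩
    · rw [yyDelta_mult_ne (vne' hab), triCount_eq_one ea eb hab]
      simp only
      omega
    · exact yyDelta_mult_ext' ha hc hac ea ec
    · exact yyDelta_mult_ext' hb hc hbc eb ec
  have n1 : A.mult u v = 0 := by
    by_contra hc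
    exact key u v w hxu.symm hxv.symm hxw.symm huv huw hvw eu ev ew (by omega)
  have n2 : A.mult u w = 0 := by
    by_contra hc
    exact key u w v hxu.symm hxw.symm hxv.symm huw huv (fun h => hvw h.symm) eu ew ev (by omega)
  have n3 : A.mult v w = 0 := by
    by_contra hc
    exact key v w u hxv.symm hxw.symm hxu.symm hvw (fun h => huv h.symm)
      (fun h => huw h.symm) ev ew eu (by omega)
  exact ⟨⟨huv, huw, hvw, hxu, hxv, hxw, m1, m2, m3, h0⟩, n1, n2, n3⟩

lemma step_key {A B : MG} (h : A.Step B ∨ A.Iso B) :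
    (A.GoodG ↔ B.GoodG) ∧ (A.GoodG → A.numConn = B.numConn) := by
  rcases h with (⟨u, v, w, hd, hiso⟩ | ⟨x, u, v, w, hw, hiso⟩) | hiso
  · constructor
    · constructor
      · intro hA
        have hs := sdelta_of_good hd hA.1
        exact (iso_goodG hiso).mp ((goodG_deltaYY_iff hs).mpr hA)
      · intro hB
        have h0 : (A.deltaYY u v w).GoodG := (iso_goodG hiso).mpr hB
        have hs := sdelta_of_good' hd h0.1
        exact (goodG_deltaYY_iff hs).mp h0
    · intro hA
      have hs := sdelta_of_good hd hA.1
      rw [iso_numConn hiso, numConn_deltaYY hs]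
  · constructor
    · constructor
      · intro hA
        have hn := nwye_of_good hw hA.1
        exact (iso_goodG hiso).mp ((goodG_yyDelta_iff hn).mpr hA)
      · intro hB
        have h0 : (A.yyDelta x u v w).GoodG := (iso_goodG hiso).mpr hB
        have hn := nwye_of_good' hw h0.1
        exact (goodG_yyDelta_iff hn).mp h0
    · intro hA
      have hn := nwye_of_good hw hA.1
      rw [iso_numConn hiso, numConn_yyDelta hn]
  · exact ⟨iso_goodG hiso, fun _ => (iso_numConn hiso).symm⟩

lemma dyy_invariant {A B : MG} (m : ℕ) (h : MG.DYYEquiv A B) :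
    (A.GoodG ∧ A.numConn = m) ↔ (B.GoodG ∧ B.numConn = m) := by
  induction h with
  | rel A B hab =>
    obtain ⟨hgood, hnum⟩ := MG.step_key hab
    constructor
    · rintro ⟨g, n⟩
      exact ⟨hgood.mp g, by rw [← hnum g]; exact n⟩
    · rintro ⟨g, n⟩
      have gA := hgood.mpr g
      exact ⟨gA, by rw [hnum gA]; exact n⟩
  | refl A => exact Iff.rfl
  | symm A B _ ih => exact ih.symm
  | trans A B C _ _ ih1 ih2 => exact ih1.trans ih2

end Assembly

end MG
end
/-- If `G` is a simple 6-regular graph with `m` edges, then every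
multigraph in the Δ-YY equivalence class of `G` has exactly `m` non-empty
connections. -/
theorem stmt_14 (G H : MG) (hs : G.Simple) (h6 : G.Regular 6) (m : ℕ)
    (hm : G.numConn = m) (h : MG.DYYEquiv G H) : H.numConn = m :=
  ((MG.dyy_invariant m h).mp ⟨MG.simple_goodG hs, hm⟩).2
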